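/- Let π be the group with presentation ⟨a, b, t | t·a·t⁻¹ = a², a·b·a⁻¹ = b⁻¹, b³ = 1⟩. Then for every finite group Q and every group homomorphism θ : π → Q, the image θ(b) is the identity element of Q. -/

import Mathlib

/-- The relators of the group `π = ⟨a, b, t | tat⁻¹ = a², aba⁻¹ = b⁻¹, b³ = 1⟩`, with the
three generators `a, b, t` encoded as `0, 1, 2 : Fin 3`: the words `t·a·t⁻¹·a⁻²`, `a·b·a⁻¹·b`
and `b³`. -/
def satelliteRels : Set (FreeGroup (Fin 3)) :=
  {FreeGroup.of 2 * FreeGroup.of 0 * (FreeGroup.of 2)⁻¹ * (FreeGroup.of 0 ^ 2)⁻¹,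
   FreeGroup.of 0 * FreeGroup.of 1 * (FreeGroup.of 0)⁻¹ * FreeGroup.of 1,
   FreeGroup.of 1 ^ 3}

/-!
If `a` has finite order and is conjugate to `a²`, then `a` and `a²` have the same order, which is
therefore odd; so `a` is a power of `a²`. In `π` the element `a²` commutes with `b`, since
conjugation by `a` inverts `b`; hence `a` commutes with `b` and `b = b⁻¹`. Together with `b³ = 1`
this forces `b = 1`.
-/

section

variable {G : Type*} [Group G] {a b t : G}

theorem odd_orderOf_of_semiconjBy_sq (ha : IsOfFinOrder a) (h : SemiconjBy t a (a ^ 2)) :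
    Odd (orderOf a) := by
  have hord : orderOf a = orderOf a / (orderOf a).gcd 2 :=
    (h.orderOf_eq t).trans (orderOf_pow' a two_ne_zero)
  rw [Nat.odd_iff, ← Nat.two_dvd_ne_zero]
  intro h2
  rw [Nat.gcd_eq_right h2] at hord
  have := ha.orderOf_pos
  omega

theorem Commute.of_sq_of_odd_orderOf (ha : Odd (orderOf a)) (h : Commute (a ^ 2) b) :
    Commute a b := by
  obtain ⟨m, hm⟩ := exists_pow_eq_self_of_coprime (Nat.coprime_two_left.mpr ha)
  simpa [hm] using h.pow_left m

theorem SemiconjBy.commute_sq_of_inv (h : SemiconjBy a b b⁻¹) : Commute (a ^ 2) b := by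
  rw [sq]
  exact (by simpa using h.inv_right : SemiconjBy a b⁻¹ b).mul_left h

theorem eq_one_of_pow_three_of_semiconjBy_sq (ha : IsOfFinOrder a) (hta : SemiconjBy t a (a ^ 2))
    (hab : SemiconjBy a b b⁻¹) (hb : b ^ 3 = 1) : b = 1 := by
  have hcomm : Commute a b :=
    hab.commute_sq_of_inv.of_sq_of_odd_orderOf (odd_orderOf_of_semiconjBy_sq ha hta)
  have hb2 : b ^ 2 = 1 := by
    rw [sq, mul_eq_one_iff_eq_inv]
    exact mul_right_cancel (hcomm.symm.trans hab)
  simpa using pow_gcd_eq_one.mpr ⟨hb2, hb⟩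

end

theorem PresentedGroup.mk_of {α : Type*} {rels : Set (FreeGroup α)} (x : α) :
    PresentedGroup.mk rels (FreeGroup.of x) = PresentedGroup.of x :=
  rfl

/-- For every finite group `Q` and every homomorphism `θ` from
`π = ⟨a, b, t | tat⁻¹ = a², aba⁻¹ = b⁻¹, b³ = 1⟩` to `Q`, the image `θ(b)` is trivial. -/
theorem stmt_10 (Q : Type*) [Group Q] [Finite Q] (θ : PresentedGroup satelliteRels →* Q) :
    θ (PresentedGroup.of (1 : Fin 3)) = 1 := by
  have hrel : ∀ r ∈ satelliteRels, θ (PresentedGroup.mk satelliteRels r) = 1 := fun r hr => by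
    rw [PresentedGroup.one_of_mem hr, map_one]
  have hta := hrel _ (Set.mem_insert _ _)
  have hab := hrel _ (Set.mem_insert_of_mem _ (Set.mem_insert _ _))
  have hb := hrel _ (Set.mem_insert_of_mem _ (Set.mem_insert_of_mem _ rfl))
  simp only [map_mul, map_inv, map_pow, PresentedGroup.mk_of] at hta hab hb
  rw [mul_inv_eq_one, mul_inv_eq_iff_eq_mul] at hta
  rw [mul_eq_one_iff_eq_inv, mul_inv_eq_iff_eq_mul] at hab
  exact eq_one_of_pow_three_of_semiconjBy_sq (isOfFinOrder_of_finite _) hta hab hb
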